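/- arXiv:1906.09185 — 3 statements merged into one kernel-verified Lean document; each statement's English description precedes it below -/
import Mathlib

section
/- For every integer d ≥ 1 there is a tree T such that no d-degenerate graph G is Ramsey for T; equivalently, the edges of every d-degenerate graph can be coloured with two colours so that there is no monochromatic copy of T. -/
open SimpleGraph

/-- The maximum degree of `G` is at most `d`: every vertex has at most `d` neighbours. -/
def MaxDegLE {α : Type*} (G : SimpleGraph α) (d : ℕ) : Prop :=
  ∀ v, (G.neighborSet v).ncard ≤ d

/-- A closed walk `c` in `G` has a chord: an edge of `G` between two vertices of `c`
that is not an edge of `c`. -/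
def HasChord {α : Type*} (G : SimpleGraph α) {u : α} (c : G.Walk u u) : Prop :=
  ∃ x y, x ∈ c.support ∧ y ∈ c.support ∧ G.Adj x y ∧ s(x, y) ∉ c.edges

/-- A graph is chordal if every cycle of length at least 4 has a chord. -/
def IsChordal {α : Type*} (G : SimpleGraph α) : Prop :=
  ∀ (u : α) (c : G.Walk u u), c.IsCycle → 4 ≤ c.length → HasChord G c

/-- `G` has treewidth at most `w`: `G` is a subgraph of a chordal graph with no
clique on `w + 2` vertices. -/
def TreewidthLE {α : Type*} (G : SimpleGraph α) (w : ℕ) : Prop :=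
  ∃ G' : SimpleGraph α, G ≤ G' ∧ IsChordal G' ∧ G'.CliqueFree (w + 2)

/-- `G` contains a copy of `H` (a subgraph isomorphic to `H`). -/
def HasCopy {α β : Type*} (G : SimpleGraph α) (H : SimpleGraph β) : Prop :=
  ∃ f : β ↪ α, ∀ u v, H.Adj u v → G.Adj (f u) (f v)

/-- Under the edge-colouring `c` of `G`, there is a copy of `H` all of whose edges
get colour `col`. -/
def HasMonoCopy {α β : Type*} (G : SimpleGraph α) (c : Sym2 α → Bool)
    (H : SimpleGraph β) (col : Bool) : Prop :=
  ∃ f : β ↪ α, ∀ u v, H.Adj u v → G.Adj (f u) (f v) ∧ c s(f u, f v) = col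

/-- `G` is Ramsey for `H`: every 2-colouring of the edges of `G` contains a
monochromatic copy of `H`. -/
def IsRamsey {α β : Type*} (G : SimpleGraph α) (H : SimpleGraph β) : Prop :=
  ∀ c : Sym2 α → Bool, ∃ col : Bool, HasMonoCopy G c H col

/-- `G` is `d`-degenerate: every nonempty (induced) subgraph has a vertex of degree
at most `d`. -/
def Degenerate {α : Type*} (d : ℕ) (G : SimpleGraph α) : Prop :=
  ∀ s : Set α, s.Nonempty → ∃ v ∈ s, (G.neighborSet v ∩ s).ncard ≤ d

/-- The strong product `G ⊠ H`. -/
def strongProd {α β : Type*} (G : SimpleGraph α) (H : SimpleGraph β) :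
    SimpleGraph (α × β) where
  Adj a b := (a.1 = b.1 ∧ H.Adj a.2 b.2) ∨ (G.Adj a.1 b.1 ∧ a.2 = b.2) ∨
    (G.Adj a.1 b.1 ∧ H.Adj a.2 b.2)
  symm := by
    constructor
    rintro a b (⟨h1, h2⟩ | ⟨h1, h2⟩ | ⟨h1, h2⟩)
    · exact Or.inl ⟨h1.symm, h2.symm⟩
    · exact Or.inr (Or.inl ⟨h1.symm, h2.symm⟩)
    · exact Or.inr (Or.inr ⟨h1.symm, h2.symm⟩)
  loopless := by
    constructor
    rintro a (⟨_, h⟩ | ⟨h, _⟩ | ⟨h, _⟩)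
    · exact H.irrefl h
    · exact G.irrefl h
    · exact G.irrefl h

/-- The complete `d`-ary tree of height `h`: vertices are sequences over `Fin d`
of length at most `h` (the root is the empty sequence), and each vertex `l` of
length `< h` has the `d` children `a :: l`. -/
def completeAryTree (d h : ℕ) : SimpleGraph {l : List (Fin d) // l.length ≤ h} :=
  SimpleGraph.fromRel (fun v w => ∃ a : Fin d, w.val = a :: v.val)

/-!
Order the vertices of a `d`-degenerate graph `G` so that every vertex has at most `d` earlier
neighbours, and fix a proper colouring `φ` of `G` with `d + 1` colours (greedily, along the same
order). Colour an edge red if `φ` increases from its earlier to its later endpoint, blue otherwise.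
In a monochromatic copy of the complete `(d + 1)`-ary tree of height `d + 1`, the `d + 1` children
of any vertex cannot all be earlier than it, so starting from the root we can always step to a later
child. Along such a root-to-leaf path of `d + 2` vertices, `φ` is strictly monotone (increasing for
red, decreasing for blue, as `φ` is proper), which is impossible with `d + 1` colours.
-/

namespace SimpleGraph

theorem isTree_of_parent {V : Type*} [Finite V] {G : SimpleGraph V} (r : V) (p : V → V)
    (ht : V → ℕ) (hadj : ∀ u v, G.Adj u v ↔ (v ≠ r ∧ u = p v) ∨ (u ≠ r ∧ v = p u))
    (hht : ∀ v, v ≠ r → ht (p v) < ht v) : G.IsTree := by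
  have reach (v : V) : G.Reachable r v := by
    induction hv : ht v using Nat.strong_induction_on generalizing v with
    | _ n ih =>
      by_cases hvr : v = r
      · rw [hvr]
      · exact (ih _ (hv ▸ hht v hvr) (p v) rfl).trans
          ((hadj _ _).2 (Or.inl ⟨hvr, rfl⟩)).reachable
  have edges : Nat.card ({r}ᶜ : Set V) = Nat.card G.edgeSet := by
    refine Nat.card_eq_of_bijective
      (fun v => ⟨s(p v, v), (hadj _ _).2 (Or.inl ⟨v.2, rfl⟩)⟩) ⟨?_, ?_⟩
    · rintro ⟨v, hv⟩ ⟨w, hw⟩ h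
      rcases Sym2.eq_iff.1 (congrArg Subtype.val h) with ⟨-, rfl⟩ | ⟨hpv, hpw⟩
      · rfl
      · dsimp only at hpv hpw
        have hv' := hht v hv
        have hw' := hht w hw
        rw [hpv] at hv'
        rw [← hpw] at hw'
        omega
    · rintro ⟨e, he⟩
      induction e using Sym2.ind with
      | _ u v =>
        rcases (hadj u v).1 he with ⟨hv, rfl⟩ | ⟨hu, rfl⟩
        · exact ⟨⟨v, hv⟩, rfl⟩
        · exact ⟨⟨u, hu⟩, Subtype.ext Sym2.eq_swap⟩
  rw [isTree_iff_connected_and_card, connected_iff_exists_forall_reachable, ← edges,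
    Nat.card_coe_set_eq, ← Set.ncard_add_ncard_compl {r}, Set.ncard_singleton, add_comm]
  exact ⟨⟨r, reach⟩, rfl⟩

end SimpleGraph

namespace completeAryTree

variable {k h : ℕ}

noncomputable instance : Fintype {l : List (Fin k) // l.length ≤ h} :=
  (List.finite_length_le (Fin k) h).fintype

def root : {l : List (Fin k) // l.length ≤ h} := ⟨[], Nat.zero_le h⟩

def parent (v : {l : List (Fin k) // l.length ≤ h}) : {l : List (Fin k) // l.length ≤ h} :=
  ⟨v.val.tail, by rw [List.length_tail]; exact Nat.sub_le_of_le_add (Nat.le_add_right_of_le v.2)⟩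

def child (a : Fin k) (w : {l : List (Fin k) // l.length ≤ h}) (hw : w.val.length < h) :
    {l : List (Fin k) // l.length ≤ h} :=
  ⟨a :: w.val, hw⟩

theorem exists_cons_iff {u v : {l : List (Fin k) // l.length ≤ h}} :
    (∃ a, v.val = a :: u.val) ↔ v ≠ root ∧ u = parent v := by
  obtain ⟨u, hu⟩ := u
  obtain ⟨_ | ⟨b, v⟩, hv⟩ := v
  · simp [root]
  · simp [root, parent, eq_comm]

theorem length_parent_lt {v : {l : List (Fin k) // l.length ≤ h}} (hv : v ≠ root) :
    (parent v).val.length < v.val.length := by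
  obtain ⟨_ | ⟨a, l⟩, hl⟩ := v
  · exact absurd rfl hv
  · simp [parent]

theorem adj_iff {u v : {l : List (Fin k) // l.length ≤ h}} :
    (completeAryTree k h).Adj u v ↔ (v ≠ root ∧ u = parent v) ∨ (u ≠ root ∧ v = parent u) := by
  rw [completeAryTree, SimpleGraph.fromRel_adj, exists_cons_iff, exists_cons_iff]
  refine and_iff_right_of_imp ?_
  rintro (⟨hv, rfl⟩ | ⟨hu, rfl⟩) h
  · exact (length_parent_lt hv).ne (congrArg (·.val.length) h)
  · exact (length_parent_lt hu).ne (congrArg (·.val.length) h.symm)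

theorem isTree : (completeAryTree k h).IsTree :=
  SimpleGraph.isTree_of_parent root parent (fun v => v.val.length) (fun _ _ => adj_iff)
    fun _ => length_parent_lt

theorem adj_child (a : Fin k) (w : {l : List (Fin k) // l.length ≤ h}) (hw : w.val.length < h) :
    (completeAryTree k h).Adj w (child a w hw) :=
  adj_iff.2 (Or.inl (exists_cons_iff.1 ⟨a, rfl⟩))

theorem child_injective (w : {l : List (Fin k) // l.length ≤ h}) (hw : w.val.length < h) :
    Function.Injective fun a => child a w hw := by
  intro a b hab
  simpa [child] using hab

theorem exists_le_of_forall_lt_child (g : {l : List (Fin k) // l.length ≤ h} → ℕ)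
    (hg : ∀ w hw, ∃ a, g w < g (child a w hw)) : ∃ w, h ≤ g w := by
  suffices ∀ t ≤ h, ∃ w : {l : List (Fin k) // l.length ≤ h}, w.val.length = t ∧ t ≤ g w by
    obtain ⟨w, -, hw⟩ := this h le_rfl
    exact ⟨w, hw⟩
  intro t ht
  induction t with
  | zero => exact ⟨root, rfl, Nat.zero_le _⟩
  | succ t ih =>
    obtain ⟨w, rfl, hw⟩ := ih (by omega)
    obtain ⟨a, ha⟩ := hg w ht
    exact ⟨child a w ht, rfl, by omega⟩

end completeAryTree

namespace Degenerate

variable {α : Type*} [Finite α] {d : ℕ} {G : SimpleGraph α}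

theorem induction_on (hG : Degenerate d G) {P : Set α → Prop} (empty : P ∅)
    (remove : ∀ s v, v ∈ s → (G.neighborSet v ∩ s).ncard ≤ d → P (s \ {v}) → P s)
    (s : Set α) : P s := by
  induction hs : s.ncard generalizing s with
  | zero => rwa [(Set.ncard_eq_zero).1 hs]
  | succ n ih =>
    obtain ⟨v, hv, hdeg⟩ := hG s (Set.nonempty_of_ncard_ne_zero (by omega))
    exact remove s v hv hdeg (ih _ (by rw [Set.ncard_sdiff_singleton_of_mem hv, hs]; rfl))

theorem exists_rank (hG : Degenerate d G) :
    ∃ ρ : α → ℕ, Function.Injective ρ ∧ ∀ v, {u | G.Adj v u ∧ ρ u < ρ v}.ncard ≤ d := by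
  suffices ∀ s : Set α, ∃ ρ : α → ℕ, s.InjOn ρ ∧
      ∀ v ∈ s, {u | G.Adj v u ∧ ρ u < ρ v ∧ u ∈ s}.ncard ≤ d by
    obtain ⟨ρ, hinj, hback⟩ := this Set.univ
    exact ⟨ρ, Set.injOn_univ.1 hinj, fun v => by simpa using hback v trivial⟩
  refine hG.induction_on ⟨fun _ => 0, by simp, by simp⟩ ?_
  classical
  rintro s v hvs hdeg ⟨ρ, hinj, hback⟩
  have : Nonempty α := ⟨v⟩
  obtain ⟨m, hm⟩ := Finite.exists_max ρ
  set ρ' := Function.update ρ v (ρ m + 1)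
  have hρ' (u : α) (hu : u ≠ v) : ρ' u = ρ u ∧ ρ' u < ρ' v := by
    rw [show ρ' u = ρ u from Function.update_of_ne hu _ _, show ρ' v = ρ m + 1 from
      Function.update_self _ _ _]
    exact ⟨rfl, Nat.lt_succ_of_le (hm u)⟩
  refine ⟨ρ', ?_, ?_⟩
  · intro x hx y hy hxy
    by_cases hxv : x = v <;> by_cases hyv : y = v
    · rw [hxv, hyv]
    · exact absurd hxy ((hρ' y hyv).2.ne' ∘ (hxv ▸ ·))
    · exact absurd hxy ((hρ' x hxv).2.ne ∘ (hyv ▸ ·))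
    · rw [(hρ' x hxv).1, (hρ' y hyv).1] at hxy
      exact hinj ⟨hx, hxv⟩ ⟨hy, hyv⟩ hxy
  · intro w hws
    by_cases hwv : w = v
    · subst hwv
      refine (Set.ncard_le_ncard ?_).trans hdeg
      exact fun u hu => ⟨hu.1, hu.2.2⟩
    · refine (Set.ncard_le_ncard ?_).trans (hback w ⟨hws, hwv⟩)
      rintro u ⟨hwu, hlt, hus⟩
      have huv : u ≠ v := by
        rintro rfl
        exact (hρ' w hwv).2.not_gt hlt
      rw [(hρ' u huv).1, (hρ' w hwv).1] at hlt
      exact ⟨hwu, hlt, hus, huv⟩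

theorem colorable (hG : Degenerate d G) : G.Colorable (d + 1) := by
  suffices ∀ s : Set α, ∃ φ : α → Fin (d + 1), ∀ u ∈ s, ∀ w ∈ s, G.Adj u w → φ u ≠ φ w by
    obtain ⟨φ, hφ⟩ := this Set.univ
    exact ⟨Coloring.mk φ fun huw => hφ _ trivial _ trivial huw⟩
  refine hG.induction_on ⟨0, by simp⟩ ?_
  classical
  rintro s v hvs hdeg ⟨φ, hφ⟩
  obtain ⟨b, hb⟩ : ∃ b, b ∉ φ '' (G.neighborSet v ∩ s) := by
    by_contra! h
    have := (Set.ncard_image_le (f := φ) (s := G.neighborSet v ∩ s)).trans hdeg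
    rw [Set.eq_univ_of_forall h, Set.ncard_univ, Nat.card_eq_fintype_card, Fintype.card_fin] at this
    omega
  have hb' (u : α) (hus : u ∈ s) (hvu : G.Adj v u) : b ≠ φ u :=
    fun hbu => hb ⟨u, ⟨hvu, hus⟩, hbu.symm⟩
  refine ⟨Function.update φ v b, fun x hx y hy hxy => ?_⟩
  by_cases hxv : x = v <;> by_cases hyv : y = v
  · exact absurd (hxv ▸ hyv ▸ hxy) (G.irrefl)
  · subst hxv
    simpa [Function.update_of_ne hyv] using hb' y hy hxy
  · subst hyv
    simpa [Function.update_of_ne hxv] using (hb' x hx hxy.symm).symm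
  · simpa [Function.update_of_ne hxv, Function.update_of_ne hyv] using
      hφ x ⟨hx, hxv⟩ y ⟨hy, hyv⟩ hxy

end Degenerate

theorem exists_later_neighbor {α ι : Type*} [Finite α] [Finite ι]
    {G : SimpleGraph α} {d : ℕ} {ρ : α → ℕ} (hρ : Function.Injective ρ)
    (hback : ∀ v, {u | G.Adj v u ∧ ρ u < ρ v}.ncard ≤ d) (hι : d < Nat.card ι) {x : α}
    {y : ι → α} (hy : Function.Injective y) (hadj : ∀ i, G.Adj x (y i)) :
    ∃ i, ρ x < ρ (y i) := by
  by_contra! h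
  have hsub : Set.range y ⊆ {u | G.Adj x u ∧ ρ u < ρ x} := by
    rintro _ ⟨i, rfl⟩
    exact ⟨hadj i, (h i).lt_of_ne fun hi => (hadj i).ne (hρ hi).symm⟩
  have := (Set.ncard_le_ncard hsub).trans (hback x)
  rw [Set.ncard_range_of_injective hy] at this
  omega

def monotoneEdgeColoring {α β γ : Type*} [LinearOrder β] [LinearOrder γ] (ρ : α → β)
    (φ : α → γ) : Sym2 α → Bool :=
  Sym2.lift ⟨fun u v => decide (ρ u < ρ v ∧ φ u < φ v ∨ ρ v < ρ u ∧ φ v < φ u),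
    fun _ _ => by simp only [or_comm]⟩

theorem monotoneEdgeColoring_mk_of_lt {α β γ : Type*} [LinearOrder β] [LinearOrder γ]
    {ρ : α → β} (φ : α → γ) {u v : α} (h : ρ u < ρ v) :
    monotoneEdgeColoring ρ φ s(u, v) = decide (φ u < φ v) := by
  simp [monotoneEdgeColoring, h, h.not_gt]

theorem SimpleGraph.Coloring.exists_lt_of_monotoneEdgeColoring_eq {α : Type*}
    {G : SimpleGraph α} {n : ℕ} (φ : G.Coloring (Fin n)) (ρ : α → ℕ) (col : Bool) :
    ∃ χ : α → Fin n, ∀ u v, G.Adj u v → ρ u < ρ v →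
      monotoneEdgeColoring ρ φ s(u, v) = col → χ u < χ v := by
  cases col
  · refine ⟨fun u => (φ u).rev, fun u v huv hρ hc => ?_⟩
    rw [monotoneEdgeColoring_mk_of_lt φ hρ, decide_eq_false_iff_not, not_lt] at hc
    exact Fin.rev_lt_rev.2 (hc.lt_of_ne (φ.valid huv).symm)
  · exact ⟨φ, fun u v _ hρ hc => by simpa [monotoneEdgeColoring_mk_of_lt φ hρ] using hc⟩

theorem statement2_general (d : ℕ) :
    ∃ (β : Type) (_ : Fintype β) (T : SimpleGraph β), T.IsTree ∧
      ∀ (α : Type) [Fintype α] (G : SimpleGraph α),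
        Degenerate d G → ¬ IsRamsey G T := by
  refine ⟨_, inferInstance, completeAryTree (d + 1) (d + 1), completeAryTree.isTree,
    fun α _ G hG hR => ?_⟩
  obtain ⟨ρ, hρ, hback⟩ := hG.exists_rank
  obtain ⟨φ⟩ := hG.colorable
  obtain ⟨col, f, hf⟩ := hR (monotoneEdgeColoring ρ φ)
  obtain ⟨χ, hχ⟩ := φ.exists_lt_of_monotoneEdgeColoring_eq ρ col
  obtain ⟨w, hw⟩ := completeAryTree.exists_le_of_forall_lt_child (fun w => (χ (f w) : ℕ))
    fun w hw => by
      have hedge a := hf _ _ (completeAryTree.adj_child a w hw)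
      obtain ⟨a, ha⟩ := exists_later_neighbor hρ hback (by simp)
        (f.injective.comp (completeAryTree.child_injective w hw)) fun a => (hedge a).1
      exact ⟨a, hχ _ _ (hedge a).1 ha (hedge a).2⟩
  exact (χ (f w)).is_lt.not_ge hw

/-- For every integer `d ≥ 1` there is a tree `T` such that no
`d`-degenerate graph `G` is Ramsey for `T`. -/
theorem statement2 (d : ℕ) (hd : 1 ≤ d) :
    ∃ (β : Type) (_ : Fintype β) (T : SimpleGraph β), T.IsTree ∧
      ∀ (α : Type) [Fintype α] (G : SimpleGraph α),
        Degenerate d G → ¬ IsRamsey G T :=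
  statement2_general d
end

section
/- Fix integers n, d, k, m ≥ 1. Let T be a tree in 𝒯_{n,d} rooted at x₀, let T' be the truncation of T, and set s = (d + d²)k. Suppose G is a graph, (V₁, V₂, …, V_m) is a vertex partition of G, and ψ is a red/blue-colouring of the edges of G such that for every i ∈ [m] the induced subgraph G[V_i] is a complete graph all of whose edges are blue, and |V_i| ≥ s. If there is a blue copy of T' in the (G, ψ, s)-colouring of K_m, then there is a blue copy of T ⊠ K_k in G. -/
open SimpleGraph

/-- There is a complete bipartite graph `K_{s,s}` between `A` and `B` in `G` all of
whose edges are blue (`false`) under `ψ`. -/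
def BlueKss {γ : Type*} (G : SimpleGraph γ) (ψ : Sym2 γ → Bool) (s : ℕ)
    (A B : Finset γ) : Prop :=
  ∃ A' B' : Finset γ, A' ⊆ A ∧ B' ⊆ B ∧ A'.card = s ∧ B'.card = s ∧
    ∀ a ∈ A', ∀ b ∈ B', G.Adj a b ∧ ψ s(a, b) = false

/-- The truncation `T'` of a tree `T` rooted at `r`: its vertices are `r` together
with the vertices at odd distance from `r`, and `v, w` are adjacent iff one is the
grandparent of the other (the grandparent of a child of `r` being `r` itself). -/
def truncation {α : Type*} (T : SimpleGraph α) (r : α) :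
    SimpleGraph {v : α // v = r ∨ Odd (T.dist r v)} :=
  SimpleGraph.fromRel (fun v w =>
    (T.dist v.val w.val = 2 ∧ T.dist r w.val + 2 = T.dist r v.val) ∨
    (T.dist r v.val = 1 ∧ w.val = r))

/-!
Every vertex `x` of `T` is blown up to `k` vertices inside the part of its anchor in `T'`: the
grandparent `p²(x)` if `x` lies on an odd level, the parent `p(x)` otherwise. An odd vertex then
shares its part, a blue clique, with its parent, while an even vertex `x ≠ r` and its parent sit
on the two sides of the blue `K_{s,s}` given by the edge `p(x) p²(p(x))` of `T'`. Only the
children and grandchildren of a vertex (or the root and its children) share its anchor, at most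
`d + d²` vertices, so the `k`-sets can be chosen disjointly inside sets of size `s`, by Hall's
theorem.
-/

open Finset Function

namespace SimpleGraph

variable {V : Type*} {T : SimpleGraph V} {r x y : V}

/-- The parent of `x` in `T` rooted at `r`; the root is its own parent, as in the paper's `p²`. -/
noncomputable def treeParent (T : SimpleGraph V) (r x : V) : V :=
  open Classical in
  if h : ∃ y, T.Adj x y ∧ T.dist r y + 1 = T.dist r x then h.choose else r

lemma treeParent_root : T.treeParent r r = r := by
  simp [treeParent]

lemma Connected.exists_adj_dist_add_one (hT : T.Connected) (hx : x ≠ r) :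
    ∃ y, T.Adj x y ∧ T.dist r y + 1 = T.dist r x := by
  obtain ⟨p, hp⟩ := hT.exists_walk_length_eq_dist x r
  cases p with
  | nil => exact absurd rfl hx
  | @cons _ y _ hxy q =>
    refine ⟨y, hxy, ?_⟩
    have hq : T.dist r y ≤ q.length := dist_comm (G := T) ▸ dist_le q
    have htri : T.dist r x ≤ T.dist r y + T.dist y x := hT.dist_triangle
    rw [dist_eq_one_iff_adj.2 hxy.symm] at htri
    rw [dist_comm, Walk.length_cons] at hp
    omega

lemma Connected.adj_treeParent (hT : T.Connected) (hx : x ≠ r) :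
    T.Adj x (T.treeParent r x) ∧ T.dist r (T.treeParent r x) + 1 = T.dist r x := by
  have h := hT.exists_adj_dist_add_one hx
  rw [treeParent, dif_pos h]
  exact h.choose_spec

lemma Connected.dist_treeParent (hT : T.Connected) (x : V) :
    T.dist r (T.treeParent r x) = T.dist r x - 1 := by
  obtain rfl | hx := eq_or_ne x r
  · simp [treeParent_root]
  · have := (hT.adj_treeParent hx).2
    omega

lemma Connected.dist_treeParent_le_one (hT : T.Connected) (x : V) :
    T.dist x (T.treeParent r x) ≤ 1 := by
  obtain rfl | hx := eq_or_ne x r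
  · simp [treeParent_root]
  · exact (dist_eq_one_iff_adj.2 (hT.adj_treeParent hx).1).le

lemma Connected.odd_dist_treeParent_iff (hT : T.Connected) (hx : x ≠ r) :
    Odd (T.dist r (T.treeParent r x)) ↔ ¬Odd (T.dist r x) := by
  rw [← (hT.adj_treeParent hx).2, Nat.odd_add_one, not_not]

lemma Walk.dist_le_of_mem_support {u v w : V} (p : T.Walk u v) (hw : w ∈ p.support) :
    T.dist u w ≤ p.length := by
  classical
  exact (dist_le (p.takeUntil w hw)).trans (p.length_takeUntil_le_length hw)

lemma IsTree.treeParent_eq_of_adj (hT : T.IsTree) (h : T.Adj x y)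
    (hd : T.dist r y + 1 = T.dist r x) : T.treeParent r x = y := by
  obtain ⟨q, hq, -⟩ := hT.connected.exists_path_of_dist r x
  -- every neighbour of `x` closer to `r` lies on the geodesic from `r` to `x`, hence is its
  -- penultimate vertex
  have key : ∀ z, T.Adj x z → T.dist r z + 1 = T.dist r x → z = q.penultimate := by
    intro z hxz hz
    obtain ⟨p, hp, hpl⟩ := hT.connected.exists_path_of_dist r z
    have hxp : x ∉ p.support := fun hx => by
      have := Walk.dist_le_of_mem_support p hx
      omega
    exact hT.isAcyclic.eq_penultimate_of_adj_end hq hxz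
      (hT.isAcyclic.mem_support_of_ne_mem_support_of_adj_of_isPath hq hp hxz hxp)
  have hx : x ≠ r := by
    rintro rfl
    simp at hd
  obtain ⟨hadj, hdist⟩ := hT.connected.adj_treeParent hx
  rw [key _ hadj hdist, key _ h hd]

lemma IsTree.treeParent_eq_or_treeParent_eq_of_adj (hT : T.IsTree) (r : V) (h : T.Adj x y) :
    T.treeParent r x = y ∨ T.treeParent r y = x := by
  rcases hT.dist_eq_dist_add_one_of_adj r h with hd | hd
  · exact Or.inl (hT.treeParent_eq_of_adj h hd.symm)
  · exact Or.inr (hT.treeParent_eq_of_adj h.symm hd.symm)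

end SimpleGraph

section TruncationAnchor

variable {V : Type*} {T : SimpleGraph V} {r x : V}

/-- The vertex of the truncation `T'` whose part of `G` receives the blow-up of `x`:
the grandparent `p²(x)` if `x` lies on an odd level, and the parent `p(x)` otherwise. -/
noncomputable def truncationAnchor (T : SimpleGraph V) (r x : V) : V :=
  if Odd (T.dist r x) then T.treeParent r (T.treeParent r x) else T.treeParent r x

lemma truncationAnchor_root : truncationAnchor T r r = r := by
  simp [truncationAnchor, treeParent_root]

lemma SimpleGraph.Connected.dist_truncationAnchor (hT : T.Connected) (x : V) :
    T.dist r (truncationAnchor T r x) =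
      if Odd (T.dist r x) then T.dist r x - 2 else T.dist r x - 1 := by
  unfold truncationAnchor
  split_ifs <;> simp only [hT.dist_treeParent]
  omega

lemma SimpleGraph.Connected.truncationAnchor_eq_or_odd (hT : T.Connected) (x : V) :
    truncationAnchor T r x = r ∨ Odd (T.dist r (truncationAnchor T r x)) := by
  rw [or_iff_not_imp_left, eq_comm, ← hT.dist_eq_zero_iff, hT.dist_truncationAnchor]
  split_ifs with h <;> rw [Nat.odd_iff] at * <;> omega

lemma SimpleGraph.Connected.truncationAnchor_treeParent (hT : T.Connected)
    (hx : Odd (T.dist r x)) :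
    truncationAnchor T r (T.treeParent r x) = truncationAnchor T r x := by
  have hxr : x ≠ r := by
    rintro rfl
    simp at hx
  have hpx : ¬Odd (T.dist r (T.treeParent r x)) :=
    by rwa [hT.odd_dist_treeParent_iff hxr, not_not]
  simp [truncationAnchor, hx, hpx]

lemma SimpleGraph.Connected.truncation_adj_truncationAnchor (hT : T.Connected)
    (hx : Odd (T.dist r x)) :
    (truncation T r).Adj ⟨x, .inr hx⟩ ⟨_, hT.truncationAnchor_eq_or_odd x⟩ := by
  have hd := hT.dist_truncationAnchor (r := r) x
  rw [if_pos hx] at hd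
  have hpos : 1 ≤ T.dist r x := hx.pos
  simp only [truncation, fromRel_adj, ne_eq, Subtype.mk.injEq]
  refine ⟨fun h => by rw [← h] at hd; omega, ?_⟩
  obtain h1 | h3 := eq_or_ne (T.dist r x) 1
  · exact .inl (.inr ⟨h1, hT.dist_eq_zero_iff.1 (by omega) |>.symm⟩)
  refine .inl (.inl ⟨le_antisymm ?_ ?_, by omega⟩)
  · have h1 := hT.dist_treeParent_le_one (r := r) x
    have h2 := hT.dist_treeParent_le_one (r := r) (T.treeParent r x)
    have := hT.dist_triangle (u := x) (v := T.treeParent r x)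
      (w := T.treeParent r (T.treeParent r x))
    unfold truncationAnchor
    rw [if_pos hx]
    omega
  · have := hT.dist_triangle (u := r) (v := truncationAnchor T r x) (w := x)
    rw [dist_comm (u := truncationAnchor T r x)] at this
    omega

lemma SimpleGraph.Connected.eq_or_adj_of_truncationAnchor_eq_root (hT : T.Connected)
    (hx : truncationAnchor T r x = r) : x = r ∨ T.Adj r x := by
  replace hx : T.dist r (truncationAnchor T r x) = 0 := by simp [hx]
  rw [hT.dist_truncationAnchor] at hx
  rw [← dist_eq_one_iff_adj, ← hT.dist_eq_zero_iff, dist_comm]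
  split_ifs at hx with h <;> rw [Nat.odd_iff] at h <;> omega

lemma SimpleGraph.Connected.adj_or_adj_adj_of_truncationAnchor_eq (hT : T.Connected) {t : V}
    (ht : t ≠ r) (hx : truncationAnchor T r x = t) :
    T.Adj t x ∨ ∃ y, T.Adj t y ∧ T.Adj y x := by
  have hxr : x ≠ r := by
    rintro rfl
    exact ht (hx.symm.trans truncationAnchor_root)
  have hpx := (hT.adj_treeParent hxr).1.symm
  unfold truncationAnchor at hx
  split_ifs at hx
  · have hpr : T.treeParent r x ≠ r := by
      rintro h
      rw [h, treeParent_root] at hx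
      exact ht hx.symm
    exact .inr ⟨_, hx ▸ (hT.adj_treeParent hpr).1.symm, hpx⟩
  · exact .inl (hx ▸ hpx)

end TruncationAnchor

lemma MaxDegLE.card_neighborFinset_le {V : Type*} [Fintype V]
    {T : SimpleGraph V} [DecidableRel T.Adj] {d : ℕ} (hTd : MaxDegLE T d) (v : V) :
    #(T.neighborFinset v) ≤ d := by
  have h := hTd v
  rwa [Set.ncard_eq_toFinset_card', ← neighborFinset_def] at h

lemma SimpleGraph.Connected.card_truncationAnchor_fiber_le {V : Type*} [Fintype V]
    [DecidableEq V] {T : SimpleGraph V} {d : ℕ} (hT : T.Connected) (hTd : MaxDegLE T d)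
    (hd : 1 ≤ d) (r t : V) :
    #{x | truncationAnchor T r x = t} ≤ d + d ^ 2 := by
  classical
  have hN := hTd.card_neighborFinset_le
  obtain rfl | ht := eq_or_ne t r
  · have hsub : ({x | truncationAnchor T t x = t} : Finset V) ⊆ insert t (T.neighborFinset t) :=
      fun x hx => by
        simpa [eq_comm] using hT.eq_or_adj_of_truncationAnchor_eq_root (mem_filter.1 hx).2
    calc _ ≤ #(insert t (T.neighborFinset t)) := card_le_card hsub
      _ ≤ #(T.neighborFinset t) + 1 := card_insert_le _ _
      _ ≤ d + d ^ 2 := by have := hN t; nlinarith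
  · have hsub : ({x | truncationAnchor T r x = t} : Finset V) ⊆
        T.neighborFinset t ∪ (T.neighborFinset t).biUnion (T.neighborFinset ·) :=
      fun x hx => by
        simpa using hT.adj_or_adj_adj_of_truncationAnchor_eq ht (mem_filter.1 hx).2
    calc _ ≤ #(T.neighborFinset t ∪ (T.neighborFinset t).biUnion (T.neighborFinset ·)) :=
          card_le_card hsub
      _ ≤ d + d * d := by
          refine (card_union_le _ _).trans (add_le_add (hN t) ?_)
          refine card_biUnion_le.trans ((sum_le_card_nsmul _ _ d fun y _ => hN y).trans ?_)
          exact Nat.mul_le_mul_right d (hN t)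
      _ = d + d ^ 2 := by ring

/-- Hall's condition, checked class by class: the classes of `c` draw from disjoint sets. -/
theorem Finset.exists_injective_of_card_fiber_le {ι κ α : Type*} [Fintype ι] [DecidableEq κ]
    [DecidableEq α] (c : ι → κ) (t : ι → Finset α)
    (hdisj : ∀ x y, c x ≠ c y → Disjoint (t x) (t y))
    (hcard : ∀ x, #{y | c y = c x} ≤ #(t x)) :
    ∃ f : ι → α, Injective f ∧ ∀ x, f x ∈ t x := by
  refine (all_card_le_biUnion_card_iff_exists_injective t).1 fun s => ?_
  have hclass : ∀ i ∈ s.image c, #{y ∈ s | c y = i} ≤ #({y ∈ s | c y = i}.biUnion t) := by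
    intro i hi
    obtain ⟨x, hx, rfl⟩ := mem_image.1 hi
    calc #{y ∈ s | c y = c x} ≤ #{y | c y = c x} :=
          card_le_card (filter_subset_filter _ (subset_univ s))
      _ ≤ #(t x) := hcard x
      _ ≤ #({y ∈ s | c y = c x}.biUnion t) :=
          card_le_card (subset_biUnion_of_mem t (mem_filter.2 ⟨hx, rfl⟩))
  have hpw : ((s.image c : Set κ)).PairwiseDisjoint fun i => {y ∈ s | c y = i}.biUnion t := by
    intro i _ j _ hij
    simp only [Function.onFun, disjoint_biUnion_left, disjoint_biUnion_right, mem_filter]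
    rintro x ⟨-, rfl⟩ y ⟨-, rfl⟩
    exact hdisj y x hij
  calc #s = ∑ i ∈ s.image c, #{y ∈ s | c y = i} := card_eq_sum_card_image c s
    _ ≤ ∑ i ∈ s.image c, #({y ∈ s | c y = i}.biUnion t) := sum_le_sum hclass
    _ = #((s.image c).biUnion fun i => {y ∈ s | c y = i}.biUnion t) := (card_biUnion hpw).symm
    _ ≤ #(s.biUnion t) := card_le_card <| by
          intro a
          simp only [mem_biUnion, mem_filter]
          rintro ⟨_, -, y, ⟨hy, -⟩, ha⟩
          exact ⟨y, hy, ha⟩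

section Colouring

variable {γ : Type*} {G : SimpleGraph γ} {ψ : Sym2 γ → Bool} {A A' B B' : Finset γ}

def BlueBetween (G : SimpleGraph γ) (ψ : Sym2 γ → Bool) (A B : Finset γ) : Prop :=
  ∀ a ∈ A, ∀ b ∈ B, a ≠ b → G.Adj a b ∧ ψ s(a, b) = false

lemma BlueBetween.mono (h : BlueBetween G ψ A B) (hA : A' ⊆ A) (hB : B' ⊆ B) :
    BlueBetween G ψ A' B' :=
  fun a ha b hb hab => h a (hA ha) b (hB hb) hab

lemma BlueBetween.symm (h : BlueBetween G ψ A B) : BlueBetween G ψ B A := by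
  intro b hb a ha hba
  obtain ⟨hadj, hψ⟩ := h a ha b hb hba.symm
  exact ⟨hadj.symm, Sym2.eq_swap ▸ hψ⟩

lemma BlueKss.exists_blueBetween {s : ℕ} (h : BlueKss G ψ s A B) :
    ∃ A' B', A' ⊆ A ∧ B' ⊆ B ∧ #A' = s ∧ #B' = s ∧ BlueBetween G ψ A' B' := by
  obtain ⟨A', B', hA, hB, hA', hB', hblue⟩ := h
  exact ⟨A', B', hA, hB, hA', hB', fun a ha b hb _ => hblue a ha b hb⟩

theorem hasMonoCopy_strongProd_top_of_hosts {αT κ : Type*} [Fintype αT] [DecidableEq κ]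
    {T : SimpleGraph αT} {k : ℕ} (c : αT → κ) (P : κ → Finset γ) (host : αT → Finset γ)
    (hP : Pairwise (Disjoint on P)) (hclique : ∀ i, BlueBetween G ψ (P i) (P i))
    (hsub : ∀ x, host x ⊆ P (c x)) (hcard : ∀ x, #{y | c y = c x} * k ≤ #(host x))
    (hedge : ∀ x y, T.Adj x y → BlueBetween G ψ (host x) (host y)) :
    HasMonoCopy G ψ (strongProd T (⊤ : SimpleGraph (Fin k))) false := by
  classical
  obtain ⟨f, hf, hfmem⟩ := exists_injective_of_card_fiber_le (fun p : αT × Fin k => c p.1)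
    (fun p => host p.1) (fun p q hpq => (hP hpq).mono (hsub p.1) (hsub q.1)) fun p => by
      rw [← univ_product_univ, filter_product_left (fun x => c x = c p.1), card_product,
        card_univ, Fintype.card_fin]
      exact hcard p.1
  refine ⟨⟨f, hf⟩, fun p q hpq => ?_⟩
  have hxy : p.1 = q.1 ∨ T.Adj p.1 q.1 := by
    rcases hpq with ⟨h, -⟩ | ⟨h, -⟩ | ⟨h, -⟩
    exacts [.inl h, .inr h, .inr h]
  have hblue : BlueBetween G ψ (host p.1) (host q.1) := by
    rcases hxy with h | h
    · rw [← h]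
      exact (hclique (c p.1)).mono (hsub p.1) (hsub p.1)
    · exact hedge _ _ h
  exact hblue _ (hfmem p) _ (hfmem q) (hf.ne ((strongProd T ⊤).ne_of_adj hpq))

end Colouring
lemma SimpleGraph.Connected.exists_truncation_hosts {αT γ : Type*} {T : SimpleGraph αT}
    {G : SimpleGraph γ} {ψ : Sym2 γ → Bool} {s : ℕ} (hc : T.Connected) (r : αT)
    (P : αT → Finset γ) (hclique : ∀ v, BlueBetween G ψ (P v) (P v)) (hroot : s ≤ #(P r))
    (hK : ∀ x, Odd (T.dist r x) → BlueKss G ψ s (P x) (P (truncationAnchor T r x))) :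
    ∃ host : αT → Finset γ, (∀ x, host x ⊆ P (truncationAnchor T r x)) ∧
      (∀ x, s ≤ #(host x)) ∧
      ∀ x, x ≠ r → BlueBetween G ψ (host x) (host (T.treeParent r x)) := by
  classical
  have hK' : ∀ x, ∃ A B : Finset γ, Odd (T.dist r x) → A ⊆ P x ∧
      B ⊆ P (truncationAnchor T r x) ∧ #A = s ∧ #B = s ∧ BlueBetween G ψ A B := by
    intro x
    by_cases hx : Odd (T.dist r x)
    · obtain ⟨A, B, h⟩ := (hK x hx).exists_blueBetween
      exact ⟨A, B, fun _ => h⟩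
    · exact ⟨∅, ∅, fun h => absurd h hx⟩
  choose A B hAB using hK'
  -- an odd vertex takes the side of the blue `K_{s,s}` towards its grandparent, a non-root even
  -- vertex the side of the `K_{s,s}` of its parent at the parent's own part
  let host x : Finset γ :=
    if Odd (T.dist r x) then B x else if x = r then P r else A (T.treeParent r x)
  have hhost_even : ∀ x, x ≠ r → ¬Odd (T.dist r x) → host x = A (T.treeParent r x) :=
    fun x hxr hx => by simp [host, hx, hxr]
  have hsub : ∀ x, host x ⊆ P (truncationAnchor T r x) := by
    intro x
    by_cases hx : Odd (T.dist r x)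
    · simpa [host, hx] using (hAB x hx).2.1
    obtain rfl | hxr := eq_or_ne x r
    · simp [host, truncationAnchor_root]
    rw [hhost_even x hxr hx, truncationAnchor, if_neg hx]
    exact (hAB _ ((hc.odd_dist_treeParent_iff hxr).2 hx)).1
  refine ⟨host, hsub, fun x => ?_, fun x hxr => ?_⟩
  · by_cases hx : Odd (T.dist r x)
    · simp [host, hx, (hAB x hx).2.2.2.1]
    obtain rfl | hxr := eq_or_ne x r
    · simpa [host, hx] using hroot
    rw [hhost_even x hxr hx, (hAB _ ((hc.odd_dist_treeParent_iff hxr).2 hx)).2.2.1]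
  · by_cases hx : Odd (T.dist r x)
    · -- an odd vertex and its parent share the part of the grandparent
      refine (hclique _).mono (hsub x) ?_
      rw [← hc.truncationAnchor_treeParent hx]
      exact hsub _
    · have hpx := (hc.odd_dist_treeParent_iff hxr).2 hx
      rw [hhost_even x hxr hx]
      simpa [host, hpx] using (hAB _ hpx).2.2.2.2

/-- `P v` stands for the part `V_{g(v)}` of a vertex `v` of `T'`. -/
theorem SimpleGraph.IsTree.hasMonoCopy_strongProd_of_blueKss {αT γ : Type*} [Fintype αT]
    {T : SimpleGraph αT} {G : SimpleGraph γ} {ψ : Sym2 γ → Bool} {d k : ℕ} (hT : T.IsTree)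
    (hTd : MaxDegLE T d) (hd : 1 ≤ d) (r : αT) (P : αT → Finset γ)
    (hP : Pairwise (Disjoint on P)) (hclique : ∀ v, BlueBetween G ψ (P v) (P v))
    (hroot : (d + d ^ 2) * k ≤ #(P r))
    (hK : ∀ x, Odd (T.dist r x) →
      BlueKss G ψ ((d + d ^ 2) * k) (P x) (P (truncationAnchor T r x))) :
    HasMonoCopy G ψ (strongProd T (⊤ : SimpleGraph (Fin k))) false := by
  classical
  obtain ⟨host, hsub, hcard, hparent⟩ :=
    hT.connected.exists_truncation_hosts r P hclique hroot hK
  refine hasMonoCopy_strongProd_top_of_hosts (truncationAnchor T r) P host hP hclique hsub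
    (fun x => ?_) fun x y hxy => ?_
  · exact (Nat.mul_le_mul_right k
      (hT.connected.card_truncationAnchor_fiber_le hTd hd r _)).trans (hcard x)
  · rcases hT.treeParent_eq_or_treeParent_eq_of_adj r hxy with rfl | rfl
    · exact hparent x fun h => hxy.ne (by rw [h, treeParent_root])
    · exact (hparent y fun h => hxy.ne (by rw [h, treeParent_root])).symm

theorem statement7_general (d k m : ℕ) (hd : 1 ≤ d)
    {αT : Type} [Fintype αT] (T : SimpleGraph αT) (hT : T.IsTree)
    (hTd : MaxDegLE T d) (x₀ : αT)
    {γ : Type} (G : SimpleGraph γ) (ψ : Sym2 γ → Bool)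
    (V : Fin m → Finset γ)
    (hpart : ∀ x : γ, ∃! i, x ∈ V i)
    (hsize : ∀ i, (d + d ^ 2) * k ≤ (V i).card)
    (hblue : ∀ i, ∀ u ∈ V i, ∀ v ∈ V i, u ≠ v → G.Adj u v ∧ ψ s(u, v) = false)
    (g : {v : αT // v = x₀ ∨ Odd (T.dist x₀ v)} ↪ Fin m)
    (hg : ∀ v w, (truncation T x₀).Adj v w →
      BlueKss G ψ ((d + d ^ 2) * k) (V (g v)) (V (g w))) :
    HasMonoCopy G ψ (strongProd T (⊤ : SimpleGraph (Fin k))) false := by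
  classical
  have hV : Pairwise (Disjoint on V) := fun i j hij =>
    disjoint_left.2 fun u hi hj => hij ((hpart u).unique hi hj)
  let P v : Finset γ := if h : v = x₀ ∨ Odd (T.dist x₀ v) then V (g ⟨v, h⟩) else ∅
  have hPV v (h : v = x₀ ∨ Odd (T.dist x₀ v)) : P v = V (g ⟨v, h⟩) := dif_pos h
  refine hT.hasMonoCopy_strongProd_of_blueKss hTd hd x₀ P (fun v w hvw => ?_) (fun v => ?_)
    (by simpa [hPV x₀ (.inl rfl)] using hsize _) fun x hx => ?_
  · simp only [onFun, P]
    split_ifs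
    exacts [hV (g.injective.ne fun h => hvw (congrArg Subtype.val h)), disjoint_bot_right,
      disjoint_bot_left, disjoint_bot_left]
  · simp only [P]
    split_ifs
    exacts [hblue _, fun _ h => absurd h (notMem_empty _)]
  · rw [hPV x (.inr hx), hPV _ (hT.connected.truncationAnchor_eq_or_odd x)]
    exact hg _ _ (hT.connected.truncation_adj_truncationAnchor hx)

/-- Let `T` be a tree with `n` vertices and maximum degree at most `d`
rooted at `x₀`, let `T'` be its truncation and `s = (d + d²)k`. Let `G` be a graph
with a vertex partition `(V 1, …, V m)` and a red/blue edge-colouring `ψ`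
(`false` = blue) such that each `G[V i]` is a complete graph all of whose edges
are blue and `|V i| ≥ s`. If there is a blue copy of `T'` in the `(G, ψ, s)`-colouring
of `K_m` (i.e. an embedding `g` of `T'` into `[m]` such that each edge of `T'` maps
to a pair `i j` with a blue `K_{s,s}` between `V i` and `V j`), then there is a blue
copy of `T ⊠ K_k` in `G`. -/
theorem statement7 (n d k m : ℕ) (hn : 1 ≤ n) (hd : 1 ≤ d) (hk : 1 ≤ k) (hm : 1 ≤ m)
    {αT : Type} [Fintype αT] (T : SimpleGraph αT) (hT : T.IsTree)
    (hTn : Fintype.card αT = n) (hTd : MaxDegLE T d) (x₀ : αT)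
    {γ : Type} [Fintype γ] (G : SimpleGraph γ) (ψ : Sym2 γ → Bool)
    (V : Fin m → Finset γ)
    (hpart : ∀ x : γ, ∃! i, x ∈ V i)
    (hsize : ∀ i, (d + d ^ 2) * k ≤ (V i).card)
    (hblue : ∀ i, ∀ u ∈ V i, ∀ v ∈ V i, u ≠ v → G.Adj u v ∧ ψ s(u, v) = false)
    (g : {v : αT // v = x₀ ∨ Odd (T.dist x₀ v)} ↪ Fin m)
    (hg : ∀ v w, (truncation T x₀).Adj v w →
      BlueKss G ψ ((d + d ^ 2) * k) (V (g v)) (V (g w))) :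
    HasMonoCopy G ψ (strongProd T (⊤ : SimpleGraph (Fin k))) false :=
  statement7_general d k m hd T hT hTd x₀ G ψ V hpart hsize hblue g hg
end

section
/- Let k ≥ 1 be an integer and let G be a (2k − 1)-degenerate graph. Then the vertex set of G can be partitioned into two sets V_r and V_b such that both induced subgraphs G[V_r] and G[V_b] are (k − 1)-degenerate. -/
/-!
Remove a vertex `v` of degree at most `a + b + 1`, split the rest by induction into an
`a`-degenerate part `A` and a `b`-degenerate part `B`, and put `v` back: by pigeonhole `v` has at
most `a` neighbours in `A` or at most `b` in `B`, and adding a vertex of small degree to a part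
keeps it degenerate, since a subset containing `v` can use `v` itself as its low-degree vertex.
With `a = b = k - 1` this splits a `(2k - 1)`-degenerate graph.
-/

open SimpleGraph

variable {α : Type*}

def DegenerateOn (d : ℕ) (G : SimpleGraph α) (s : Set α) : Prop :=
  ∀ t ⊆ s, t.Nonempty → ∃ v ∈ t, (G.neighborSet v ∩ t).ncard ≤ d

theorem degenerateOn_empty (d : ℕ) (G : SimpleGraph α) : DegenerateOn d G ∅ := by
  rintro t ht ⟨x, hx⟩
  exact absurd (ht hx) (Set.notMem_empty x)

theorem DegenerateOn.degenerate_induce {d : ℕ} {G : SimpleGraph α} {s : Set α}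
    (h : DegenerateOn d G s) : Degenerate d (G.induce s) := by
  intro t ht
  obtain ⟨_, ⟨v, hvt, rfl⟩, hv⟩ :=
    h (Subtype.val '' t) (Subtype.coe_image_subset s t) (ht.image _)
  refine ⟨v, hvt, ?_⟩
  have himage : Subtype.val '' ((G.induce s).neighborSet v ∩ t) =
      G.neighborSet v ∩ Subtype.val '' t := by
    ext x
    constructor
    · rintro ⟨y, ⟨hadj, hyt⟩, rfl⟩
      exact ⟨hadj, y, hyt, rfl⟩
    · rintro ⟨hadj, y, hyt, rfl⟩
      exact ⟨y, ⟨hadj, hyt⟩, rfl⟩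
  rwa [← Set.ncard_image_of_injective _ Subtype.val_injective, himage]

section Finite

variable [Finite α]

theorem DegenerateOn.insert {d : ℕ} {G : SimpleGraph α} {s : Set α} {v : α}
    (h : DegenerateOn d G s) (hv : (G.neighborSet v ∩ s).ncard ≤ d) :
    DegenerateOn d G (insert v s) := by
  intro t ht hne
  by_cases hvt : v ∈ t
  · refine ⟨v, hvt, le_trans (Set.ncard_le_ncard ?_) hv⟩
    rintro x ⟨hadj, hxt⟩
    exact ⟨hadj, (ht hxt).resolve_left (G.ne_of_adj hadj).symm⟩
  · exact h t (fun x hx => (ht hx).resolve_left (ne_of_mem_of_not_mem hx hvt)) hne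

theorem ncard_inter_le_or_ncard_inter_le {a b : ℕ} {s A B : Set α} (hAB : Disjoint A B)
    (h : (s ∩ (A ∪ B)).ncard ≤ a + b + 1) :
    (s ∩ A).ncard ≤ a ∨ (s ∩ B).ncard ≤ b := by
  have hsplit : (s ∩ (A ∪ B)).ncard = (s ∩ A).ncard + (s ∩ B).ncard := by
    rw [Set.inter_union_distrib_left,
      Set.ncard_union_eq (hAB.mono Set.inter_subset_right Set.inter_subset_right)]
  omega

theorem Degenerate.exists_degenerateOn_partition {a b : ℕ} {G : SimpleGraph α}
    (hG : Degenerate (a + b + 1) G) (s : Set α) :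
    ∃ A B, Disjoint A B ∧ A ∪ B = s ∧ DegenerateOn a G A ∧ DegenerateOn b G B := by
  induction hn : s.ncard using Nat.strong_induction_on generalizing s with
  | _ n ih =>
  rcases s.eq_empty_or_nonempty with rfl | hne
  · exact ⟨∅, ∅, disjoint_bot_left, Set.empty_union ∅,
      degenerateOn_empty a G, degenerateOn_empty b G⟩
  obtain ⟨v, hvs, hdeg⟩ := hG s hne
  obtain ⟨A, B, hAB, hunion, hA, hB⟩ :=
    ih _ (hn ▸ Set.ncard_sdiff_singleton_lt_of_mem hvs) (s \ {v}) rfl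
  have hvA : v ∉ A := fun h => (hunion ▸ Set.mem_union_left B h).2 rfl
  have hvB : v ∉ B := fun h => (hunion ▸ Set.mem_union_right A h).2 rfl
  have hs : s = insert v (A ∪ B) := by
    rw [hunion, Set.insert_sdiff_singleton, Set.insert_eq_of_mem hvs]
  have hdeg' : (G.neighborSet v ∩ (A ∪ B)).ncard ≤ a + b + 1 :=
    le_trans (Set.ncard_le_ncard
      (Set.inter_subset_inter_right _ (hunion ▸ Set.sdiff_subset))) hdeg
  rcases ncard_inter_le_or_ncard_inter_le hAB hdeg' with hfew | hfew
  · exact ⟨insert v A, B, Set.disjoint_insert_left.2 ⟨hvB, hAB⟩,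
      by rw [hs, Set.insert_union], hA.insert hfew, hB⟩
  · exact ⟨A, insert v B, Set.disjoint_insert_right.2 ⟨hvA, hAB⟩,
      by rw [hs, Set.union_insert], hA, hB.insert hfew⟩

end Finite

/-- Let `k ≥ 1` and let `G` be a `(2k - 1)`-degenerate graph. Then the
vertex set of `G` can be partitioned into two sets `V_r` and `V_b` (a set and its
complement) such that both induced subgraphs are `(k - 1)`-degenerate. -/
theorem statement15 {α : Type} [Fintype α] (k : ℕ) (hk : 1 ≤ k)
    (G : SimpleGraph α) (hG : Degenerate (2 * k - 1) G) :
    ∃ A : Set α, Degenerate (k - 1) (SimpleGraph.induce A G) ∧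
      Degenerate (k - 1) (SimpleGraph.induce Aᶜ G) := by
  have hG' : Degenerate ((k - 1) + (k - 1) + 1) G := by
    rwa [show (k - 1) + (k - 1) + 1 = 2 * k - 1 by omega]
  obtain ⟨A, B, hAB, hunion, hA, hB⟩ := hG'.exists_degenerateOn_partition Set.univ
  have hB_eq : B = Aᶜ := eq_compl_iff_isCompl.2 (IsCompl.of_eq hAB.symm.eq_bot
    ((sup_comm B A).trans hunion))
  exact ⟨A, hA.degenerate_induce, hB_eq ▸ hB.degenerate_induce⟩
end
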